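/- arXiv:2007.09646 — 7 statements merged into one kernel-verified Lean document; each statement's English description precedes it below -/
import Mathlib

section
/- Let U be a finite-dimensional real vector space, Q a nondegenerate alternating bilinear form on U, and G a finite group of linear automorphisms of U preserving Q (i.e. Q(gx, gy) = Q(x, y) for all g ∈ G and x, y ∈ U). Then the fixed locus 𝔖(U,Q)^G = { J ∈ 𝔖(U,Q) : g ∘ J = J ∘ g for all g ∈ G }, viewed as a subset of the space of linear endomorphisms of U with its natural topology, is path-connected. -/
/-!
Averaging over the finite group `G` gives a `G`-invariant inner product `p`; writing
`Q x y = p (A x) y`, the operator `A` is `p`-skew, invertible and commutes with `G`, and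
`K = A (-A²)^(-1/2)` is a `G`-invariant point of `𝔖(U,Q)`. The inverse square root is a
polynomial in `-A²` (interpolate on its spectrum), which is what makes `K` commute with `G`.

Around `K`, the Cayley transform `J ↦ (J - K)(J + K)⁻¹` identifies `𝔖(U,Q)` with the disk of
operators `W` that anticommute with `K`, are `Q`-skew and strictly contract the metric
`Q(·, K ·)`; its inverse `W ↦ (1 - W)⁻¹(1 + W)K` is continuous. Both maps are equivariant, so
the fixed locus is the continuous image of the `G`-fixed part of the disk, which is star-shaped
about `0`.
-/

open Function Polynomial
open scoped InnerProductSpace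

lemma Commute.aeval_right {R A : Type*} [CommSemiring R] [Semiring A] [Algebra R A] {a b : A}
    (h : Commute a b) (f : R[X]) : Commute a (aeval b f) := by
  induction f using Polynomial.induction_on' with
  | add p q hp hq => simpa only [map_add] using hp.add_right hq
  | monomial n r =>
    simpa only [aeval_monomial]
      using (Algebra.commute_algebraMap_right r a).mul_right (h.pow_right n)

lemma ContinuousLinearMap.isUnit_of_injective {𝕜 E : Type*} [NontriviallyNormedField 𝕜]
    [CompleteSpace 𝕜] [NormedAddCommGroup E] [NormedSpace 𝕜 E] [FiniteDimensional 𝕜 E]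
    {f : E →L[𝕜] E} (hf : Injective f) : IsUnit f :=
  have := FiniteDimensional.complete 𝕜 E
  f.isUnit_iff_bijective.2 ⟨hf, LinearMap.injective_iff_surjective.1 hf⟩

section InnerProductSpace

variable {V : Type*} [NormedAddCommGroup V] [InnerProductSpace ℝ V]

lemma LinearMap.IsSymmetric.aeval {T : V →ₗ[ℝ] V} (hT : T.IsSymmetric) (f : ℝ[X]) :
    (aeval T f).IsSymmetric := by
  induction f using Polynomial.induction_on' with
  | add p q hp hq => simpa only [map_add] using hp.add hq
  | monomial n a =>
    simpa only [aeval_monomial, Algebra.algebraMap_eq_smul_one, smul_mul_assoc, one_mul]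
      using (hT.pow n).smul (by simp)

variable [FiniteDimensional ℝ V]

lemma LinearMap.IsSymmetric.exists_mul_pow_four_eq_one {T : V →ₗ[ℝ] V} (hT : T.IsSymmetric)
    (hT_pos : ∀ x, x ≠ 0 → 0 < ⟪T x, x⟫_ℝ) :
    ∃ S : V →ₗ[ℝ] V, S.IsSymmetric ∧ T * S ^ 4 = 1 ∧ ∀ P, Commute P T → Commute P S := by
  set b := hT.eigenvectorBasis rfl
  set μ := hT.eigenvalues rfl
  obtain ⟨f, hf⟩ : ∃ f : ℝ[X], ∀ t ∈ Finset.univ.image μ, f.eval t = (√√t)⁻¹ :=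
    ⟨Lagrange.interpolate (Finset.univ.image μ) _root_.id fun t => (√√t)⁻¹,
      fun _ ht => Lagrange.eval_interpolate_at_node _ (Set.injOn_id _) ht⟩
  refine ⟨Polynomial.aeval T f, hT.aeval f, b.toBasis.ext fun i => ?_, fun P hP => hP.aeval_right f⟩
  have hμ : 0 < μ i := by
    simpa [b, μ, hT.apply_eigenvectorBasis, real_inner_smul_left]
      using hT_pos (b i) (b.orthonormal.ne_zero i)
  have hfμ : f.eval (μ i) = (√√(μ i))⁻¹ := hf _ (Finset.mem_image_of_mem μ (Finset.mem_univ i))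
  have h4 : (√√(μ i)) ^ 4 = μ i := by
    rw [show 4 = 2 * 2 from rfl, pow_mul, Real.sq_sqrt (Real.sqrt_nonneg _), Real.sq_sqrt hμ.le]
  have key := Module.End.aeval_apply_of_hasEigenvector (p := X * f ^ 4)
    (hT.hasEigenvector_eigenvectorBasis rfl i)
  simp only [map_mul, map_pow, aeval_X, eval_mul, eval_pow, eval_X] at key
  simp only [OrthonormalBasis.coe_toBasis, Module.End.one_apply]
  rw [key]
  change (μ i * f.eval (μ i) ^ 4) • b i = b i
  rw [hfμ, inv_pow, h4, mul_inv_cancel₀ hμ.ne', one_smul]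

theorem exists_complexStructure_of_skewAdjoint {A : V →ₗ[ℝ] V}
    (hA : ∀ x y, ⟪A x, y⟫_ℝ = -⟪x, A y⟫_ℝ) (hA_inj : Injective A) :
    ∃ K : V →ₗ[ℝ] V, K * K = -1 ∧ (∀ x y, ⟪A (K x), K y⟫_ℝ = ⟪A x, y⟫_ℝ) ∧
      (∀ x, x ≠ 0 → 0 < ⟪A x, K x⟫_ℝ) ∧ ∀ P, Commute P A → Commute P K := by
  set T := -(A * A)
  have hT : T.IsSymmetric := fun x y => by simp [T, hA]
  have hT_pos : ∀ x, x ≠ 0 → 0 < ⟪T x, x⟫_ℝ := fun x hx => by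
    simpa [T, hA] using pow_pos (norm_pos_iff.2 ((map_ne_zero_iff A hA_inj).2 hx)) 2
  obtain ⟨S, hS, hTS, hS_comm⟩ := hT.exists_mul_pow_four_eq_one hT_pos
  have hS_inj : Injective S := by
    refine (injective_iff_map_eq_zero S).2 fun x hx => ?_
    simpa [pow_succ, hx, eq_comm] using LinearMap.congr_fun hTS x
  have hAS : Commute A (S ^ 2) :=
    (hS_comm A (Commute.refl A |>.mul_right (.refl A)).neg_right).pow_right 2
  -- `K = A * S ^ 2 = A T^(-1/2)`; taking a fourth root makes `⟪A x, K x⟫ = ⟪T (S x), S x⟫`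
  -- visibly positive
  refine ⟨A * S ^ 2, ?_, fun x y => ?_, fun x hx => ?_,
    fun P hP => hP.mul_right ((hS_comm P (hP.mul_right hP).neg_right).pow_right 2)⟩
  · rw [mul_assoc, ← mul_assoc (S ^ 2), ← hAS.eq,
      show A * (A * S ^ 2 * S ^ 2) = -(T * S ^ 4) by simp only [T]; noncomm_ring, hTS]
  · have key : S ^ 2 * (A * (A * (A * S ^ 2))) = -A := by
      rw [hAS.symm.left_comm, hAS.symm.left_comm, hAS.symm.left_comm,
        show A * (A * (A * (S ^ 2 * S ^ 2))) = -(A * (T * S ^ 4)) by simp only [T]; noncomm_ring,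
        hTS, mul_one]
    have h := LinearMap.congr_fun key x
    simp only [Module.End.mul_apply, LinearMap.neg_apply] at h
    simp only [Module.End.mul_apply]
    rw [← neg_neg ⟪A (A _), _⟫_ℝ, ← hA, ← hS.pow 2, h, inner_neg_left, neg_neg]
  · have hST : S (T x) = T (S x) := (LinearMap.congr_fun (hS_comm T (.refl T)).eq x).symm
    have h := hT_pos (S x) ((map_ne_zero_iff S hS_inj).2 hx)
    rw [← hST, hS] at h
    simpa [T, sq, hA] using h

end InnerProductSpace

namespace LinearMap.BilinForm

variable {V : Type*} [AddCommGroup V] [Module ℝ V]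

lemma nondegenerate_of_pos {p : LinearMap.BilinForm ℝ V} (hp_pos : ∀ x, x ≠ 0 → 0 < p x x) :
    p.Nondegenerate :=
  ⟨fun x hx => by_contra fun h => (hp_pos x h).ne' (hx x),
    fun y hy => by_contra fun h => (hp_pos y h).ne' (hy y)⟩

variable [FiniteDimensional ℝ V]

theorem exists_isSymm_pos_invariant (G : Subgroup (V ≃ₗ[ℝ] V)) [Finite G] :
    ∃ p : LinearMap.BilinForm ℝ V, p.IsSymm ∧ (∀ x, x ≠ 0 → 0 < p x x) ∧
      ∀ g ∈ G, ∀ x y, p (g x) (g y) = p x y := by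
  have := Fintype.ofFinite G
  let e : V ≃ₗ[ℝ] EuclideanSpace ℝ (Fin (Module.finrank ℝ V)) :=
    LinearEquiv.ofFinrankEq _ _ (by simp)
  let p : LinearMap.BilinForm ℝ V :=
    ∑ g : G, (innerₗ _).compl₁₂ (e.toLinearMap ∘ₗ (g : V ≃ₗ[ℝ] V).toLinearMap)
      (e.toLinearMap ∘ₗ (g : V ≃ₗ[ℝ] V).toLinearMap)
  have hp : ∀ x y, p x y = ∑ g : G, ⟪e (g.1 x), e (g.1 y)⟫_ℝ := fun x y => by simp [p]
  refine ⟨p, ⟨fun x y => by simp only [hp, real_inner_comm]⟩, fun x hx => ?_, fun g hg x y => ?_⟩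
  · rw [hp]
    exact Finset.sum_pos' (fun g _ => real_inner_self_nonneg) ⟨1, Finset.mem_univ _,
      by simpa using pow_pos (norm_pos_iff.2 (e.map_ne_zero_iff.2 hx)) 2⟩
  · rw [hp, hp]
    exact Fintype.sum_equiv (Equiv.mulRight ⟨g, hg⟩) _ _ fun k => by simp [LinearEquiv.mul_apply]

theorem exists_compatible_complexStructure_of_posDef {Q p : LinearMap.BilinForm ℝ V}
    (hQ : Q.IsAlt) (hQ_nd : Q.Nondegenerate) (hp : p.IsSymm) (hp_pos : ∀ x, x ≠ 0 → 0 < p x x) :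
    ∃ K : V →ₗ[ℝ] V, (∀ x, K (K x) = -x) ∧ (∀ x y, Q (K x) (K y) = Q x y) ∧
      (∀ x, x ≠ 0 → 0 < Q x (K x)) ∧
      ∀ g : V ≃ₗ[ℝ] V, (∀ x y, Q (g x) (g y) = Q x y) → (∀ x y, p (g x) (g y) = p x y) →
        ∀ x, g (K x) = K (g x) := by
  let core : InnerProductSpace.Core ℝ V :=
    { inner := fun x y => p x y
      conj_inner_symm := fun x y => hp.eq y x
      re_inner_nonneg := fun x => by
        rcases eq_or_ne x 0 with rfl | hx
        · simp
        · exact (hp_pos x hx).le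
      definite := fun x hx => by_contra fun h => (hp_pos x h).ne' hx
      add_left := fun x y z => by simp
      smul_left := fun x y r => by simp }
  let _ : NormedAddCommGroup V := core.toNormedAddCommGroup
  let _ : InnerProductSpace ℝ V := InnerProductSpace.ofCore core.toCore
  have hp_nd := nondegenerate_of_pos hp_pos
  set A := Q.symmCompOfNondegenerate p hp_nd
  have hA : ∀ x y, p (A x) y = Q x y := fun x y => symmCompOfNondegenerate_left_apply Q hp_nd y x
  have hA_skew : ∀ x y, ⟪A x, y⟫_ℝ = -⟪x, A y⟫_ℝ := fun x y => by
    change p (A x) y = -p x (A y)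
    rw [hp.eq x, hA, hA, hQ.neg_eq]
  have hA_inj : Injective A := by
    refine (injective_iff_map_eq_zero A).2 fun x hx => hQ_nd.1 x fun y => ?_
    rw [← hA, hx, map_zero, LinearMap.zero_apply]
  obtain ⟨K, hKK, hK_compat, hK_pos, hK_comm⟩ :=
    exists_complexStructure_of_skewAdjoint hA_skew hA_inj
  refine ⟨K, fun x => by simpa using LinearMap.congr_fun hKK x, fun x y => ?_, fun x hx => ?_,
    fun g hgQ hgp => LinearMap.congr_fun (hK_comm g ?_).eq⟩
  · rw [← hA, ← hA]; exact hK_compat x y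
  · rw [← hA]; exact hK_pos x hx
  · refine LinearMap.ext fun x => sub_eq_zero.1 <| hp_nd.1 _ fun y => ?_
    have h := hgp (A x) (g.symm y)
    rw [g.apply_symm_apply, hA, ← hgQ, g.apply_symm_apply, ← hA] at h
    simp [h]

end LinearMap.BilinForm

section SiegelSpace

variable {U : Type*} [NormedAddCommGroup U] [NormedSpace ℝ U]

structure IsCompatibleComplexStructure (Q : LinearMap.BilinForm ℝ U) (J : U →L[ℝ] U) : Prop where
  apply_apply : ∀ x, J (J x) = -x
  map_map : ∀ x y, Q (J x) (J y) = Q x y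
  pos : ∀ x, x ≠ 0 → 0 < Q x (J x)

structure InSiegelDisk (Q : LinearMap.BilinForm ℝ U) (K W : U →L[ℝ] U) : Prop where
  anticomm : ∀ x, W (K x) = -K (W x)
  skew : ∀ x y, Q (W x) y = -Q x (W y)
  lt : ∀ y, y ≠ 0 → Q (W y) (K (W y)) < Q y (K y)

noncomputable def cayley (K W : U →L[ℝ] U) : U →L[ℝ] U := Ring.inverse (1 - W) * ((1 + W) * K)

noncomputable def cayleyInv (K J : U →L[ℝ] U) : U →L[ℝ] U := (J - K) * Ring.inverse (J + K)

variable {Q : LinearMap.BilinForm ℝ U} {J K W : U →L[ℝ] U}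

namespace IsCompatibleComplexStructure

lemma mul_self (hJ : IsCompatibleComplexStructure Q J) : J * J = -1 :=
  ContinuousLinearMap.ext hJ.apply_apply

lemma nonneg (hJ : IsCompatibleComplexStructure Q J) (x : U) : 0 ≤ Q x (J x) := by
  rcases eq_or_ne x 0 with rfl | hx
  · simp
  · exact (hJ.pos x hx).le

lemma inSiegelDisk_zero (hK : IsCompatibleComplexStructure Q K) : InSiegelDisk Q K 0 where
  anticomm := by simp
  skew := by simp
  lt y hy := by simpa using hK.pos y hy

end IsCompatibleComplexStructure

namespace InSiegelDisk

lemma eq_zero_of_map_eq (hW : InSiegelDisk Q K W) {y : U}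
    (hy : Q (W y) (K (W y)) = Q y (K y)) : y = 0 :=
  by_contra fun h => (hW.lt y h).ne hy

lemma injective_one_sub (hW : InSiegelDisk Q K W) : Injective ⇑(1 - W : U →L[ℝ] U) :=
  (injective_iff_map_eq_zero _).2 fun y hy => hW.eq_zero_of_map_eq <| by
    rw [show W y = y from (sub_eq_zero.1 (by simpa using hy)).symm]

lemma injective_one_add (hW : InSiegelDisk Q K W) : Injective ⇑(1 + W : U →L[ℝ] U) :=
  (injective_iff_map_eq_zero _).2 fun y hy => hW.eq_zero_of_map_eq <| by
    rw [show W y = -y by simpa [add_eq_zero_iff_eq_neg'] using hy]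
    simp

lemma isUnit_one_sub [FiniteDimensional ℝ U] (hW : InSiegelDisk Q K W) : IsUnit (1 - W) :=
  ContinuousLinearMap.isUnit_of_injective hW.injective_one_sub

lemma surjective_one_add [FiniteDimensional ℝ U] (hW : InSiegelDisk Q K W) :
    Surjective ⇑(1 + W : U →L[ℝ] U) :=
  LinearMap.injective_iff_surjective.1 hW.injective_one_add

lemma mul_anticomm (hW : InSiegelDisk Q K W) : W * K = -(K * W) :=
  ContinuousLinearMap.ext hW.anticomm

lemma smul (hW : InSiegelDisk Q K W) (hK : IsCompatibleComplexStructure Q K) {t : ℝ}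
    (ht : |t| ≤ 1) : InSiegelDisk Q K (t • W) where
  anticomm x := by simp [hW.anticomm]
  skew x y := by simp [hW.skew]
  lt y hy := by
    have ht2 : t ^ 2 ≤ 1 := (sq_le_one_iff_abs_le_one t).2 ht
    have h := hW.lt y hy
    have h0 := hK.nonneg (W y)
    simp only [smul_apply, map_smul, LinearMap.smul_apply, smul_eq_mul]
    nlinarith

lemma mul_one_add_eq (hW : InSiegelDisk Q K W) : K * (1 + W) = (1 - W) * K := by
  rw [mul_add, sub_mul, hW.mul_anticomm, mul_one, one_mul, sub_neg_eq_add]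

lemma one_add_mul_eq (hW : InSiegelDisk Q K W) : (1 + W) * K = K * (1 - W) := by
  rw [add_mul, mul_sub, hW.mul_anticomm, mul_one, one_mul, sub_eq_add_neg]

lemma map_one_add (hW : InSiegelDisk Q K W) (a b : U) :
    Q ((1 + W) a) ((1 + W) b) = Q a b + Q (W a) (W b) := by
  simp only [add_apply, one_apply_eq_self, map_add, LinearMap.add_apply, hW.skew a b]
  ring

end InSiegelDisk

lemma one_sub_mul_cayley (h : IsUnit (1 - W)) : (1 - W) * cayley K W = (1 + W) * K :=
  Ring.mul_inverse_cancel_left _ _ h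

lemma continuousOn_cayley [CompleteSpace U] (K : U →L[ℝ] U) :
    ContinuousOn (cayley K) {W | IsUnit (1 - W)} := fun W hW => by
  have h : ContinuousAt Ring.inverse (1 - W) :=
    hW.unit_spec ▸ NormedRing.inverse_continuousAt hW.unit
  exact ((h.comp (f := fun V => 1 - V) (by fun_prop)).mul (by fun_prop)).continuousWithinAt

namespace InSiegelDisk

variable [FiniteDimensional ℝ U] (hW : InSiegelDisk Q K W)
include hW

lemma cayley_mul_one_add : cayley K W * (1 + W) = (1 + W) * K := by
  refine hW.isUnit_one_sub.mul_left_cancel ?_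
  rw [← mul_assoc, one_sub_mul_cayley hW.isUnit_one_sub, mul_assoc, hW.mul_one_add_eq, ← mul_assoc,
    ← mul_assoc]
  congr 1
  noncomm_ring

lemma commute_cayley {g : U →ₗ[ℝ] U} (hgK : ∀ x, g (K x) = K (g x))
    (hgW : ∀ x, g (W x) = W (g x)) (x : U) : g (cayley K W x) = cayley K W (g x) := by
  have h := ContinuousLinearMap.ext_iff.1 (one_sub_mul_cayley (K := K) hW.isUnit_one_sub)
  simp only [mul_apply_eq_comp, sub_apply, add_apply, one_apply_eq_self] at h
  refine hW.injective_one_sub ?_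
  simp only [sub_apply, one_apply_eq_self]
  rw [h, ← hgW, ← map_sub, h, map_add, hgW, hgK]

lemma cayley_one_add_apply (a : U) : cayley K W ((1 + W) a) = (1 + W) (K a) :=
  ContinuousLinearMap.ext_iff.1 hW.cayley_mul_one_add a

lemma isCompatibleComplexStructure_cayley (hK : IsCompatibleComplexStructure Q K) :
    IsCompatibleComplexStructure Q (cayley K W) where
  apply_apply x := by
    have hC := hW.isUnit_one_sub
    have hJJ : cayley K W * cayley K W = -1 := by
      calc cayley K W * cayley K W
          = Ring.inverse (1 - W) * (K * ((1 - W) * Ring.inverse (1 - W)) * K * (1 - W)) := by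
            rw [cayley, hW.one_add_mul_eq]; noncomm_ring
        _ = -1 := by
            rw [Ring.mul_inverse_cancel _ hC, mul_one, hK.mul_self, neg_one_mul, mul_neg,
              Ring.inverse_mul_cancel _ hC]
    simpa using ContinuousLinearMap.ext_iff.1 hJJ x
  map_map x y := by
    obtain ⟨a, rfl⟩ := hW.surjective_one_add x
    obtain ⟨b, rfl⟩ := hW.surjective_one_add y
    rw [hW.cayley_one_add_apply, hW.cayley_one_add_apply, hW.map_one_add, hW.map_one_add,
      hK.map_map, hW.anticomm, hW.anticomm]
    simp only [map_neg, LinearMap.neg_apply, neg_neg, hK.map_map]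
  pos x hx := by
    obtain ⟨a, rfl⟩ := hW.surjective_one_add x
    have ha : a ≠ 0 := by rintro rfl; simp at hx
    rw [hW.cayley_one_add_apply, hW.map_one_add, hW.anticomm, map_neg]
    linarith [hW.lt a ha]

end InSiegelDisk

namespace IsCompatibleComplexStructure

variable (hK : IsCompatibleComplexStructure Q K) (hJ : IsCompatibleComplexStructure Q J)
include hK hJ

lemma add_mul_left : (J + K) * J = K * (J + K) := by
  rw [add_mul, mul_add, hJ.mul_self, hK.mul_self, add_comm]

lemma mul_add_right : J * (J + K) = (J + K) * K := by
  rw [add_mul, mul_add, hJ.mul_self, hK.mul_self, add_comm]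

variable [FiniteDimensional ℝ U]

lemma isUnit_add : IsUnit (J + K) := by
  refine ContinuousLinearMap.isUnit_of_injective <| (injective_iff_map_eq_zero _).2 fun x hx =>
    by_contra fun h => ?_
  have hJx : J x = -K x := eq_neg_of_add_eq_zero_left (by simpa using hx)
  have := hJ.pos x h
  rw [hJx, map_neg] at this
  linarith [hK.pos x h]

lemma cayleyInv_mul_add : cayleyInv K J * (J + K) = J - K := by
  rw [cayleyInv, mul_assoc, Ring.inverse_mul_cancel _ (hK.isUnit_add hJ), mul_one]

lemma cayleyInv_add_apply (a : U) : cayleyInv K J ((J + K) a) = J a - K a :=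
  ContinuousLinearMap.ext_iff.1 (hK.cayleyInv_mul_add hJ) a

lemma inSiegelDisk_cayleyInv : InSiegelDisk Q K (cayleyInv K J) where
  anticomm x := by
    have h : cayleyInv K J * K = -(K * cayleyInv K J) := by
      refine (hK.isUnit_add hJ).mul_right_cancel ?_
      rw [mul_assoc, ← hK.add_mul_left hJ, ← mul_assoc, hK.cayleyInv_mul_add hJ, neg_mul,
        mul_assoc, hK.cayleyInv_mul_add hJ, sub_mul, mul_sub, hJ.mul_self, hK.mul_self]
      abel
    simpa using ContinuousLinearMap.ext_iff.1 h x
  skew x y := by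
    have hS := (ContinuousLinearMap.isUnit_iff_bijective.1 (hK.isUnit_add hJ)).2
    obtain ⟨a, rfl⟩ := hS x
    obtain ⟨b, rfl⟩ := hS y
    rw [hK.cayleyInv_add_apply hJ, hK.cayleyInv_add_apply hJ]
    simp only [add_apply, map_add, map_sub, LinearMap.add_apply, LinearMap.sub_apply, hJ.map_map,
      hK.map_map]
    ring
  lt y hy := by
    have hS := (ContinuousLinearMap.isUnit_iff_bijective.1 (hK.isUnit_add hJ)).2
    obtain ⟨a, rfl⟩ := hS y
    have ha : a ≠ 0 := by rintro rfl; simp at hy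
    have h1 := hK.map_map a (J a)
    have h2 := hJ.map_map (J a) a
    rw [hJ.apply_apply] at h2
    rw [hK.cayleyInv_add_apply hJ]
    -- the right side exceeds the left by `4 * Q a (J a)`
    simp only [add_apply, map_add, map_sub, map_neg, LinearMap.add_apply, LinearMap.sub_apply,
      LinearMap.neg_apply, hK.apply_apply] at h2 ⊢
    linarith [hJ.pos a ha]

lemma cayley_cayleyInv : cayley K (cayleyInv K J) = J := by
  have hS := hK.isUnit_add hJ
  have key : (1 - cayleyInv K J) * J = (1 + cayleyInv K J) * K := by
    refine hS.mul_right_cancel ?_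
    have h1 : (1 - cayleyInv K J) * (J + K) = K + K := by
      rw [sub_mul, one_mul, hK.cayleyInv_mul_add hJ]; abel
    have h2 : (1 + cayleyInv K J) * (J + K) = J + J := by
      rw [add_mul, one_mul, hK.cayleyInv_mul_add hJ]; abel
    rw [mul_assoc, hK.mul_add_right hJ, mul_assoc, ← hK.add_mul_left hJ, ← mul_assoc,
      ← mul_assoc, h1, h2, add_mul, add_mul, hJ.mul_self, hK.mul_self]
  rw [cayley, ← key, Ring.inverse_mul_cancel_left _ _ (hK.inSiegelDisk_cayleyInv hJ).isUnit_one_sub]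

lemma commute_cayleyInv {g : U →ₗ[ℝ] U} (hgK : ∀ x, g (K x) = K (g x))
    (hgJ : ∀ x, g (J x) = J (g x)) (x : U) : g (cayleyInv K J x) = cayleyInv K J (g x) := by
  have hS := hK.isUnit_add hJ
  have hgS : ∀ x, g ((J + K) x) = (J + K) (g x) := by simp [hgJ, hgK]
  have hS_inv : ∀ z, (J + K) (Ring.inverse (J + K) z) = z :=
    ContinuousLinearMap.ext_iff.1 (Ring.mul_inverse_cancel _ hS)
  have hgS_inv : g (Ring.inverse (J + K) x) = Ring.inverse (J + K) (g x) :=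
    (ContinuousLinearMap.isUnit_iff_bijective.1 hS).1 (by rw [← hgS, hS_inv, hS_inv])
  simp only [cayleyInv, mul_apply_eq_comp, sub_apply, map_sub, hgJ, hgK, hgS_inv]

end IsCompatibleComplexStructure

theorem exists_isCompatibleComplexStructure_forall_commute [FiniteDimensional ℝ U]
    (hQ : Q.IsAlt) (hQ_nd : Q.Nondegenerate) (G : Subgroup (U ≃ₗ[ℝ] U)) [Finite G]
    (hGQ : ∀ g ∈ G, ∀ x y, Q (g x) (g y) = Q x y) :
    ∃ K : U →L[ℝ] U, IsCompatibleComplexStructure Q K ∧ ∀ g ∈ G, ∀ x, g (K x) = K (g x) := by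
  obtain ⟨p, hp, hp_pos, hpG⟩ := LinearMap.BilinForm.exists_isSymm_pos_invariant G
  obtain ⟨K, hKK, hKQ, hK_pos, hK_comm⟩ :=
    LinearMap.BilinForm.exists_compatible_complexStructure_of_posDef hQ hQ_nd hp hp_pos
  exact ⟨LinearMap.toContinuousLinearMap K, ⟨hKK, hKQ, hK_pos⟩,
    fun g hg => hK_comm g (hGQ g hg) (hpG g hg)⟩

end SiegelSpace

/-- Let `U` be a finite-dimensional real vector space, `Q` a nondegenerate
alternating bilinear form on `U`, and `G` a finite group of linear automorphisms of `U`
preserving `Q`.  Then the fixed locus `𝔖(U,Q)^G`, i.e. the set of `J` in the Siegel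
space `𝔖(U,Q)` commuting with every element of `G`, viewed inside the space of linear
endomorphisms of `U` with its natural topology, is path-connected. -/
theorem siegel_space_fixed_locus_pathConnected
    (U : Type*) [NormedAddCommGroup U] [NormedSpace ℝ U] [FiniteDimensional ℝ U]
    (Q : LinearMap.BilinForm ℝ U) (hQalt : Q.IsAlt) (hQnd : Q.Nondegenerate)
    (G : Subgroup (U ≃ₗ[ℝ] U)) (hGfin : Finite G)
    (hGQ : ∀ g ∈ G, ∀ x y : U, Q (g x) (g y) = Q x y) :
    IsPathConnected {J : U →L[ℝ] U |
      (∀ x, J (J x) = -x) ∧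
      (∀ x y, Q (J x) (J y) = Q x y) ∧
      (∀ x, x ≠ 0 → 0 < Q x (J x)) ∧
      (∀ g ∈ G, ∀ x, g (J x) = J (g x))} := by
  obtain ⟨K, hK, hKG⟩ := exists_isCompatibleComplexStructure_forall_commute hQalt hQnd G hGQ
  set D := {W | InSiegelDisk Q K W ∧ ∀ g ∈ G, ∀ x, g (W x) = W (g x)}
  have hD : StarConvex ℝ 0 D := fun W ⟨hW, hWG⟩ a b ha hb hab => by
    rw [smul_zero, zero_add]
    exact ⟨hW.smul hK (abs_le.2 ⟨by linarith, by linarith⟩), fun g hg x => by simp [hWG g hg x]⟩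
  convert (hD.isPathConnected ⟨hK.inSiegelDisk_zero, by simp⟩).image'
    ((continuousOn_cayley K).mono fun W hW => hW.1.isUnit_one_sub)
  ext J
  constructor
  · rintro ⟨h1, h2, h3, hJG⟩
    have hJ : IsCompatibleComplexStructure Q J := ⟨h1, h2, h3⟩
    exact ⟨cayleyInv K J, ⟨hK.inSiegelDisk_cayleyInv hJ,
      fun g hg => hK.commute_cayleyInv hJ (hKG g hg) (hJG g hg)⟩, hK.cayley_cayleyInv hJ⟩
  · rintro ⟨W, ⟨hW, hWG⟩, rfl⟩
    obtain ⟨h1, h2, h3⟩ := hW.isCompatibleComplexStructure_cayley hK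
    exact ⟨h1, h2, h3, fun g hg => hW.commute_cayley (hKG g hg) (hWG g hg)⟩
end

section
/- Let U be a finite-dimensional real vector space, Q a nondegenerate alternating bilinear form on U, and G a finite group of linear automorphisms of U preserving Q (i.e. Q(gx, gy) = Q(x, y) for all g ∈ G and x, y ∈ U). Then there exists J ∈ 𝔖(U,Q) commuting with every element of G, i.e. a linear endomorphism J of U with J ∘ J = −id, Q(Jx, Jy) = Q(x, y) for all x, y, Q(x, Jx) > 0 for all x ≠ 0, and g ∘ J = J ∘ g for all g ∈ G. In particular (taking G trivial) the Siegel space 𝔖(U,Q) is nonempty. -/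
/-!
Averaging over `G` gives a `G`-invariant inner product. In an orthonormal basis for it, `Q`
becomes a skew-symmetric invertible matrix `ω` and every `g ∈ G` an orthogonal matrix; since
`gᵀ ω g = ω` and `gᵀ = g⁻¹`, each `g` commutes with `ω`. The complex structure is
`j = ω⁻¹ |ω|` with `|ω| = √(ωᵀω) = √(-ω²)`: it squares to `-1`, preserves `ω`, has `ωj = |ω|`
positive definite, and commutes with everything that commutes with `ω`, since `|ω|` is a
continuous function of `-ω²`.
-/

open LinearMap (BilinForm)
open LinearMap.BilinForm

section PolarPart

variable {A : Type*} [PartialOrder A] [Ring A] [StarRing A] [TopologicalSpace A]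
  [StarOrderedRing A] [Algebra ℝ A] [ContinuousFunctionalCalculus ℝ A IsSelfAdjoint]
  [NonnegSpectrumClass ℝ A] [IsTopologicalRing A] [T2Space A]

theorem IsUnit.exists_complex_structure_of_star_eq_neg {a : A} (ha : IsUnit a)
    (ha' : star a = -a) :
    ∃ j : A, j * j = -1 ∧ star j * a * j = a ∧ IsStrictlyPositive (a * j) ∧
      ∀ b : A, Commute b a → Commute b j := by
  obtain ⟨ω, rfl⟩ := ha
  set s := CFC.abs (ω : A) with hs
  have hss : s * s = -(ω * ω) := by rw [hs, CFC.abs_mul_abs, ha', neg_mul]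
  have hcomm : ∀ b : A, Commute b ω → Commute b s := fun b hb =>
    (Commute.cfcₙ_nnreal (by rw [ha', neg_mul]; exact (hb.mul_right hb).neg_right.symm) _).symm
  have hinv : Commute (↑ω⁻¹ : A) s := hcomm _ (Commute.units_inv_left (Commute.refl _))
  have hstar_inv : star (↑ω⁻¹ : A) = -↑ω⁻¹ := by
    rw [← neg_eq_iff_eq_neg]
    refine Units.eq_inv_of_mul_eq_one_left (u := ω) ?_
    rw [mul_neg, ← neg_mul, ← ha', ← star_mul, Units.inv_mul, star_one]
  have hinv_ss : ↑ω⁻¹ * (s * s) = -ω := by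
    rw [hss, mul_neg, ← mul_assoc, Units.inv_mul, one_mul]
  refine ⟨↑ω⁻¹ * s, ?_, ?_, ?_, fun b hb => hb.units_inv_right.mul_right (hcomm b hb)⟩
  · calc ↑ω⁻¹ * s * (↑ω⁻¹ * s) = ↑ω⁻¹ * (↑ω⁻¹ * (s * s)) := by
          rw [mul_assoc, ← mul_assoc s, ← hinv.eq, mul_assoc]
      _ = -1 := by rw [hinv_ss, mul_neg, Units.inv_mul]
  · calc star (↑ω⁻¹ * s) * ω * (↑ω⁻¹ * s) = -(↑ω⁻¹ * (s * s)) := by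
          rw [star_mul, (CFC.abs_nonneg _).isSelfAdjoint.star_eq, hstar_inv, mul_neg, neg_mul,
            neg_mul, mul_assoc s, Units.inv_mul, mul_one, ← mul_assoc, ← hinv.eq, mul_assoc]
      _ = ω := by rw [hinv_ss, neg_neg]
  · rw [← mul_assoc, Units.mul_inv, one_mul]
    exact IsStrictlyPositive.sqrt _
      ((ω.isUnit.star.mul ω.isUnit).isStrictlyPositive (star_mul_self_nonneg _))

end PolarPart

section Coordinates

variable {R V ι : Type*} [CommRing R] [StarRing R] [TrivialStar R] [AddCommGroup V] [Module R V]
  [Fintype ι] [DecidableEq ι]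

theorem LinearMap.BilinForm.star_toMatrix_of_isAlt {Q : BilinForm R V} (hQ : Q.IsAlt)
    (b : Module.Basis ι R V) : star (toMatrix b Q) = -toMatrix b Q := by
  ext i j
  simp [toMatrix_apply, ← LinearMap.IsAlt.neg hQ (b i) (b j)]

theorem LinearMap.BilinForm.star_toMatrix_mul_mul_toMatrix {B : BilinForm R V}
    (b : Module.Basis ι R V) {g : V →ₗ[R] V} (hg : ∀ x y, B (g x) (g y) = B x y) :
    star (LinearMap.toMatrix b b g) * toMatrix b B * LinearMap.toMatrix b b g = toMatrix b B := by
  rw [Matrix.star_eq_conjTranspose, Matrix.conjTranspose_eq_transpose_of_trivial,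
    ← toMatrix_comp]
  congr 1
  ext x y
  exact hg x y

theorem LinearMap.BilinForm.commute_toMatrix_of_toMatrix_eq_one {B Q : BilinForm R V}
    {b : Module.Basis ι R V} (hb : toMatrix b B = 1) {g : V →ₗ[R] V}
    (hgB : ∀ x y, B (g x) (g y) = B x y) (hgQ : ∀ x y, Q (g x) (g y) = Q x y) :
    Commute (LinearMap.toMatrix b b g) (toMatrix b Q) := by
  set m := LinearMap.toMatrix b b g
  have hm : m * star m = 1 := mul_eq_one_comm.mp <| by
    simpa [hb] using star_toMatrix_mul_mul_toMatrix b hgB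
  calc m * toMatrix b Q = m * (star m * toMatrix b Q * m) := by
        rw [star_toMatrix_mul_mul_toMatrix b hgQ]
    _ = toMatrix b Q * m := by rw [← mul_assoc, ← mul_assoc, hm, one_mul]

theorem Matrix.PosDef.toBilin_apply_self_pos [PartialOrder R] {M : Matrix ι ι R} (hM : M.PosDef)
    (b : Module.Basis ι R V) {x : V} (hx : x ≠ 0) : 0 < Matrix.toBilin b M x x := by
  rw [apply_eq_dotProduct_toMatrix_mulVec b, toMatrix_toBilin]
  simpa using hM.dotProduct_mulVec_pos (by simpa using hx)

end Coordinates

section InvariantInnerProduct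

variable {V : Type*} [AddCommGroup V] [Module ℝ V] [FiniteDimensional ℝ V]

theorem LinearMap.BilinForm.exists_basis_toMatrix_eq_one {B : BilinForm ℝ V} (hB : B.IsSymm)
    (hpos : ∀ x, x ≠ 0 → 0 < B x x) :
    ∃ b : Module.Basis (Fin (Module.finrank ℝ V)) ℝ V, toMatrix b B = 1 := by
  let core : InnerProductSpace.Core ℝ V :=
    { inner := fun x y => B x y
      conj_inner_symm := fun x y => hB.eq y x
      re_inner_nonneg := fun x => by
        rcases eq_or_ne x 0 with rfl | hx
        · simp
        · exact (hpos x hx).le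
      add_left := fun x y z => by simp
      smul_left := fun x y r => by simp
      definite := fun x hx => by
        by_contra h
        exact (hpos x h).ne' hx }
  let _ : NormedAddCommGroup V := core.toNormedAddCommGroup
  let _ : InnerProductSpace ℝ V := .ofCore core.toCore
  let e := stdOrthonormalBasis ℝ V
  refine ⟨e.toBasis, Matrix.ext fun i j => ?_⟩
  rw [toMatrix_apply, e.coe_toBasis]
  exact orthonormal_iff_ite.mp e.orthonormal i j

theorem exists_isSymm_pos_invariant_bilinForm (G : Subgroup (V ≃ₗ[ℝ] V)) [Finite G] :
    ∃ B : BilinForm ℝ V, B.IsSymm ∧ (∀ x, x ≠ 0 → 0 < B x x) ∧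
      ∀ g ∈ G, ∀ x y, B (g x) (g y) = B x y := by
  have := Fintype.ofFinite G
  let b := Module.finBasis ℝ V
  let B₀ : BilinForm ℝ V := Matrix.toBilin b 1
  refine ⟨∑ g : G, B₀.compl₁₂ (g : V →ₗ[ℝ] V) g, ⟨fun x y => ?_⟩, fun x hx => ?_,
    fun h hh x y => ?_⟩
  · simp only [LinearMap.sum_apply, LinearMap.compl₁₂_apply]
    exact Finset.sum_congr rfl fun g _ =>
      ((Matrix.isSymm_toBilin_iff_isSymm b).mpr Matrix.isSymm_one).eq _ _
  · simp only [LinearMap.sum_apply, LinearMap.compl₁₂_apply]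
    have hB₀ : ∀ y : V, y ≠ 0 → 0 < B₀ y y := fun y hy =>
      (Matrix.PosDef.one (n := Fin (Module.finrank ℝ V)) (R := ℝ)).toBilin_apply_self_pos b hy
    exact Finset.sum_pos (fun g _ => hB₀ _ ((g : V ≃ₗ[ℝ] V).map_ne_zero_iff.mpr hx))
      Finset.univ_nonempty
  · simp only [LinearMap.sum_apply, LinearMap.compl₁₂_apply]
    exact Fintype.sum_equiv (Equiv.mulRight ⟨h, hh⟩) _ _ fun d => by
      simp only [Equiv.coe_mulRight, Subgroup.coe_mul, LinearEquiv.coe_coe, LinearEquiv.mul_apply]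

open scoped MatrixOrder in
theorem exists_compatible_complex_structure_commuting {Q B : BilinForm ℝ V} (hQalt : Q.IsAlt)
    (hQnd : Q.Nondegenerate) (hB : B.IsSymm) (hBpos : ∀ x, x ≠ 0 → 0 < B x x)
    (S : Set (V ≃ₗ[ℝ] V)) (hSB : ∀ g ∈ S, ∀ x y, B (g x) (g y) = B x y)
    (hSQ : ∀ g ∈ S, ∀ x y, Q (g x) (g y) = Q x y) :
    ∃ J : V →ₗ[ℝ] V,
      (∀ x, J (J x) = -x) ∧
      (∀ x y, Q (J x) (J y) = Q x y) ∧
      (∀ x, x ≠ 0 → 0 < Q x (J x)) ∧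
      (∀ g ∈ S, ∀ x, g (J x) = J (g x)) := by
  obtain ⟨b, hb⟩ := exists_basis_toMatrix_eq_one hB hBpos
  have hω : IsUnit (toMatrix b Q) := (Matrix.isUnit_iff_isUnit_det _).mpr
    ((nondegenerate_iff_det_ne_zero b).mp hQnd).isUnit
  obtain ⟨j, hjj, hjω, hjpos, hjcomm⟩ :=
    hω.exists_complex_structure_of_star_eq_neg (star_toMatrix_of_isAlt hQalt b)
  refine ⟨Matrix.toLin b b j, fun x => ?_, fun x y => ?_, fun x hx => ?_, fun g hg x => ?_⟩
  · rw [← Matrix.toLin_mul_apply b b b, hjj]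
    simp
  · have : Q.comp (Matrix.toLin b b j) (Matrix.toLin b b j) = Q := by
      apply (toMatrix b).injective
      rw [toMatrix_comp b b, LinearMap.toMatrix_toLin,
        ← Matrix.conjTranspose_eq_transpose_of_trivial]
      exact hjω
    exact LinearMap.congr_fun₂ this x y
  · have : Q.compRight (Matrix.toLin b b j) = Matrix.toBilin b (toMatrix b Q * j) := by
      rw [← toMatrix_symm, LinearEquiv.eq_symm_apply, toMatrix_compRight b,
        LinearMap.toMatrix_toLin]
    have hpos := (Matrix.isStrictlyPositive_iff_posDef.mp hjpos).toBilin_apply_self_pos b hx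
    rwa [← this] at hpos
  · have hcomm := hjcomm _ (commute_toMatrix_of_toMatrix_eq_one hb (hSB g hg) (hSQ g hg))
    change (g : V →ₗ[ℝ] V) _ = Matrix.toLin b b j ((g : V →ₗ[ℝ] V) x)
    rw [← Matrix.toLin_toMatrix b b g, ← Matrix.toLin_mul_apply b b b, hcomm.eq,
      Matrix.toLin_mul_apply b b b]

end InvariantInnerProduct

/-- Let `U` be a finite-dimensional real vector space, `Q` a nondegenerate
alternating bilinear form on `U`, and `G` a finite group of linear automorphisms of `U`
preserving `Q`.  Then there exists a complex structure `J ∈ 𝔖(U,Q)` (i.e. `J² = −id`,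
`Q(Jx,Jy) = Q(x,y)` and `Q(x,Jx) > 0` for `x ≠ 0`) commuting with every element of `G`.
In particular (taking `G` trivial) the Siegel space `𝔖(U,Q)` is nonempty. -/
theorem exists_invariant_compatible_complex_structure
    (U : Type*) [AddCommGroup U] [Module ℝ U] [FiniteDimensional ℝ U]
    (Q : LinearMap.BilinForm ℝ U) (hQalt : Q.IsAlt) (hQnd : Q.Nondegenerate)
    (G : Subgroup (U ≃ₗ[ℝ] U)) (hGfin : Finite G)
    (hGQ : ∀ g ∈ G, ∀ x y : U, Q (g x) (g y) = Q x y) :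
    ∃ J : U →ₗ[ℝ] U,
      (∀ x, J (J x) = -x) ∧
      (∀ x y, Q (J x) (J y) = Q x y) ∧
      (∀ x, x ≠ 0 → 0 < Q x (J x)) ∧
      (∀ g ∈ G, ∀ x, g (J x) = J (g x)) := by
  obtain ⟨B, hB, hBpos, hBG⟩ := exists_isSymm_pos_invariant_bilinForm G
  exact exists_compatible_complex_structure_commuting hQalt hQnd hB hBpos G hBG hGQ
end

section
/- Let U be a finite-dimensional real vector space and Q a nondegenerate alternating bilinear form on U. The symplectic group Sp(U,Q) = { T ∈ GL(U) : Q(Tx, Ty) = Q(x, y) for all x, y } acts transitively on the Siegel space by conjugation: for any J₁, J₂ ∈ 𝔖(U,Q) there exists T ∈ Sp(U,Q) with T ∘ J₁ ∘ T⁻¹ = J₂. -/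
/-!
A point `J` of the Siegel space turns `U` into a complex vector space (with `i` acting as `J`)
carrying the positive definite Hermitian form `H(x, y) = Q(x, J y) + i Q(x, y)`. Complex inner
product spaces of the same finite dimension are isometric, and a complex-linear isometry
`(U, J₁, H₁) ≃ (U, J₂, H₂)` is a real-linear map commuting `J₁` to `J₂` that preserves
`Q = Im H`, i.e. a symplectic conjugation.
-/

open Complex Module

theorem LinearIsometryEquiv.nonempty_of_finrank_eq {𝕜 E F : Type*} [RCLike 𝕜]
    [NormedAddCommGroup E] [InnerProductSpace 𝕜 E] [FiniteDimensional 𝕜 E]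
    [NormedAddCommGroup F] [InnerProductSpace 𝕜 F] [FiniteDimensional 𝕜 F]
    (h : finrank 𝕜 E = finrank 𝕜 F) : Nonempty (E ≃ₗᵢ[𝕜] F) :=
  ⟨(stdOrthonormalBasis 𝕜 E).repr.trans
    ((stdOrthonormalBasis 𝕜 F).reindex (finCongr h.symm)).repr.symm⟩

section

variable {U : Type*} [AddCommGroup U] [Module ℝ U] {Q : LinearMap.BilinForm ℝ U}

structure SiegelPoint (Q : LinearMap.BilinForm ℝ U) where
  J : U →ₗ[ℝ] U
  J_J : ∀ x, J (J x) = -x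
  Q_J_J : ∀ x y, Q (J x) (J y) = Q x y
  Q_J_pos : ∀ x, x ≠ 0 → 0 < Q x (J x)

namespace SiegelPoint

variable (s : SiegelPoint Q)

theorem J_mul_J : s.J * s.J = -1 := LinearMap.ext s.J_J

theorem Q_J_left (x y : U) : Q (s.J x) y = -Q x (s.J y) := by
  rw [← s.Q_J_J x (s.J y), s.J_J, map_neg, neg_neg]

def HermitianSpace (_s : SiegelPoint Q) : Type _ := U

instance : AddCommGroup s.HermitianSpace := inferInstanceAs (AddCommGroup U)

instance : Module ℂ s.HermitianSpace :=
  Module.compHom U (liftAux s.J s.J_mul_J).toRingHom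

def toHermitianSpace : U ≃ₗ[ℝ] s.HermitianSpace where
  toFun x := x
  invFun x := x
  map_add' _ _ := rfl
  map_smul' r x := by
    show r • x = liftAux s.J s.J_mul_J (r : ℂ) x
    rw [liftAux_apply]
    simp
  left_inv _ := rfl
  right_inv _ := rfl

theorem toHermitianSpace_J (x : U) : s.toHermitianSpace (s.J x) = I • s.toHermitianSpace x := by
  show s.J x = liftAux s.J s.J_mul_J I x
  rw [liftAux_apply_I]

theorem toHermitianSpace_symm_smul (z : ℂ) (x : U) :
    s.toHermitianSpace.symm (z • s.toHermitianSpace x) = z.re • x + z.im • s.J x := by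
  show liftAux s.J s.J_mul_J z x = _
  simp [liftAux_apply]

instance [FiniteDimensional ℝ U] : FiniteDimensional ℂ s.HermitianSpace :=
  have := Module.Finite.equiv s.toHermitianSpace
  Module.Finite.of_restrictScalars_finite ℝ ℂ s.HermitianSpace

theorem finrank_eq_two_mul : finrank ℝ U = 2 * finrank ℂ s.HermitianSpace := by
  rw [s.toHermitianSpace.finrank_eq, finrank_real_of_complex]

variable [hQ : Fact Q.IsAlt]

instance : InnerProductSpace.Core ℂ s.HermitianSpace where
  inner x y :=
    ⟨Q (s.toHermitianSpace.symm x) (s.J (s.toHermitianSpace.symm y)),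
      Q (s.toHermitianSpace.symm x) (s.toHermitianSpace.symm y)⟩
  conj_inner_symm x y := by
    apply Complex.ext
    · simp only [conj_re]
      rw [← hQ.out.neg_eq, s.Q_J_left, neg_neg]
    · simp only [conj_im]
      rw [← hQ.out.neg_eq, neg_neg]
  re_inner_nonneg x := by
    show 0 ≤ Q (s.toHermitianSpace.symm x) (s.J (s.toHermitianSpace.symm x))
    rcases eq_or_ne (s.toHermitianSpace.symm x) 0 with h | h
    · simp [h]
    · exact (s.Q_J_pos _ h).le
  add_left x y z := by
    apply Complex.ext <;> simp
  smul_left x y z := by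
    obtain ⟨x, rfl⟩ := s.toHermitianSpace.surjective x
    apply Complex.ext
    · simp [toHermitianSpace_symm_smul, s.Q_J_J]
    · simp [toHermitianSpace_symm_smul, s.Q_J_left]
  definite x hx := by
    by_contra h
    have := s.Q_J_pos (s.toHermitianSpace.symm x) (by simpa using h)
    exact this.ne' (congrArg Complex.re hx)

noncomputable instance : NormedAddCommGroup s.HermitianSpace :=
  InnerProductSpace.Core.toNormedAddCommGroup (𝕜 := ℂ)

noncomputable instance : InnerProductSpace ℂ s.HermitianSpace :=
  InnerProductSpace.ofCore (inferInstance : InnerProductSpace.Core ℂ _).toCore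

theorem im_inner_toHermitianSpace (x y : U) :
    (inner ℂ (s.toHermitianSpace x) (s.toHermitianSpace y)).im = Q x y :=
  rfl

variable [FiniteDimensional ℝ U]

theorem exists_symplectic_intertwining (s₁ s₂ : SiegelPoint Q) :
    ∃ T : U ≃ₗ[ℝ] U, (∀ x y, Q (T x) (T y) = Q x y) ∧
      ∀ x, T (s₁.J x) = s₂.J (T x) := by
  obtain ⟨e⟩ : Nonempty (s₁.HermitianSpace ≃ₗᵢ[ℂ] s₂.HermitianSpace) :=
    have h₁ := s₁.finrank_eq_two_mul
    have h₂ := s₂.finrank_eq_two_mul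
    LinearIsometryEquiv.nonempty_of_finrank_eq (by omega)
  let T := s₁.toHermitianSpace ≪≫ₗ e.toLinearEquiv.restrictScalars ℝ ≪≫ₗ
    s₂.toHermitianSpace.symm
  have hT (x : U) : s₂.toHermitianSpace (T x) = e (s₁.toHermitianSpace x) :=
    s₂.toHermitianSpace.apply_symm_apply _
  refine ⟨T, fun x y => ?_, fun x => s₂.toHermitianSpace.injective ?_⟩
  · rw [← s₂.im_inner_toHermitianSpace, hT, hT, e.inner_map_map,
      s₁.im_inner_toHermitianSpace]
  · rw [hT, s₁.toHermitianSpace_J, s₂.toHermitianSpace_J, hT, e.map_smul]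

end SiegelPoint

end

theorem symplectic_group_acts_transitively_on_siegel_space_general
    (U : Type*) [AddCommGroup U] [Module ℝ U] [FiniteDimensional ℝ U]
    (Q : LinearMap.BilinForm ℝ U) (hQalt : Q.IsAlt)
    (J₁ J₂ : U →ₗ[ℝ] U)
    (hJ₁2 : ∀ x, J₁ (J₁ x) = -x)
    (hJ₁Q : ∀ x y, Q (J₁ x) (J₁ y) = Q x y)
    (hJ₁pos : ∀ x, x ≠ 0 → 0 < Q x (J₁ x))
    (hJ₂2 : ∀ x, J₂ (J₂ x) = -x)
    (hJ₂Q : ∀ x y, Q (J₂ x) (J₂ y) = Q x y)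
    (hJ₂pos : ∀ x, x ≠ 0 → 0 < Q x (J₂ x)) :
    ∃ T : U ≃ₗ[ℝ] U,
      (∀ x y, Q (T x) (T y) = Q x y) ∧
      (∀ x, T (J₁ (T.symm x)) = J₂ x) := by
  have : Fact Q.IsAlt := ⟨hQalt⟩
  obtain ⟨T, hTQ, hTJ⟩ := SiegelPoint.exists_symplectic_intertwining
    ⟨J₁, hJ₁2, hJ₁Q, hJ₁pos⟩ ⟨J₂, hJ₂2, hJ₂Q, hJ₂pos⟩
  exact ⟨T, hTQ, fun x => by simpa using hTJ (T.symm x)⟩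

/-- Let `U` be a finite-dimensional real vector space and `Q` a
nondegenerate alternating bilinear form on `U`.  The symplectic group
`Sp(U,Q) = {T ∈ GL(U) : Q(Tx,Ty) = Q(x,y)}` acts transitively on the Siegel space by
conjugation: for any `J₁, J₂ ∈ 𝔖(U,Q)` there is `T ∈ Sp(U,Q)` with `T J₁ T⁻¹ = J₂`. -/
theorem symplectic_group_acts_transitively_on_siegel_space
    (U : Type*) [AddCommGroup U] [Module ℝ U] [FiniteDimensional ℝ U]
    (Q : LinearMap.BilinForm ℝ U) (hQalt : Q.IsAlt) (hQnd : Q.Nondegenerate)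
    (J₁ J₂ : U →ₗ[ℝ] U)
    (hJ₁2 : ∀ x, J₁ (J₁ x) = -x)
    (hJ₁Q : ∀ x y, Q (J₁ x) (J₁ y) = Q x y)
    (hJ₁pos : ∀ x, x ≠ 0 → 0 < Q x (J₁ x))
    (hJ₂2 : ∀ x, J₂ (J₂ x) = -x)
    (hJ₂Q : ∀ x y, Q (J₂ x) (J₂ y) = Q x y)
    (hJ₂pos : ∀ x, x ≠ 0 → 0 < Q x (J₂ x)) :
    ∃ T : U ≃ₗ[ℝ] U,
      (∀ x y, Q (T x) (T y) = Q x y) ∧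
      (∀ x, T (J₁ (T.symm x)) = J₂ x) :=
  symplectic_group_acts_transitively_on_siegel_space_general U Q hQalt J₁ J₂ hJ₁2 hJ₁Q hJ₁pos hJ₂2
    hJ₂Q hJ₂pos
end

section
/- Let U be a finite-dimensional real vector space and Q a nondegenerate alternating bilinear form on U. For every J ∈ 𝔖(U,Q), the stabilizer { T ∈ GL(U) : Q(Tx, Ty) = Q(x, y) for all x, y, and T ∘ J = J ∘ T } is a compact subset of the space of linear endomorphisms of U (with its natural topology), and it is a subgroup of GL(U). -/
/-!
An element of the stabilizer preserves both `Q` and `J`, hence the form `x ↦ Q x (J x)`, which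
is positive definite and so comparable with `‖x‖ ^ 2` in finite dimension. This bounds the
operator norm of every element, and the stabilizer is cut out by closed conditions, so it is
compact. The same positivity makes every such map injective, so bijectivity is automatic.
-/

open Bornology

namespace LinearMap.BilinForm

theorem injective_of_apply_self_eq {M : Type*} [AddCommGroup M] [Module ℝ M]
    {B : LinearMap.BilinForm ℝ M} (hB : ∀ x, x ≠ 0 → 0 < B x x) {T : M →ₗ[ℝ] M}
    (hT : ∀ x, B (T x) (T x) = B x x) : Function.Injective T := by
  refine (injective_iff_map_eq_zero T).mpr fun x hx => ?_
  by_contra hx0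
  exact (hB x hx0).ne (by simpa [hx] using hT x)

variable {U : Type*} [NormedAddCommGroup U] [NormedSpace ℝ U] [FiniteDimensional ℝ U]
  {B : LinearMap.BilinForm ℝ U}

theorem apply_self_le_mul_norm_sq (B : LinearMap.BilinForm ℝ U) (x : U) :
    B x x ≤ ‖B.toContinuousBilinearMap‖ * ‖x‖ ^ 2 :=
  calc B x x ≤ ‖B.toContinuousBilinearMap x x‖ := le_abs_self _
    _ ≤ ‖B.toContinuousBilinearMap‖ * ‖x‖ * ‖x‖ := B.toContinuousBilinearMap.le_opNorm₂ x x
    _ = ‖B.toContinuousBilinearMap‖ * ‖x‖ ^ 2 := by ring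

theorem exists_pos_mul_norm_sq_le (hB : ∀ x, x ≠ 0 → 0 < B x x) :
    ∃ m > 0, ∀ x, m * ‖x‖ ^ 2 ≤ B x x := by
  rcases subsingleton_or_nontrivial U with hU | hU
  · exact ⟨1, one_pos, fun x => by simp [Subsingleton.elim x 0]⟩
  obtain ⟨u₀, hu₀, hmin⟩ := (isCompact_sphere (0 : U) 1).exists_isMinOn
    (NormedSpace.sphere_nonempty.mpr zero_le_one)
    (B.toContinuousBilinearMap.continuous₂.comp (continuous_id.prodMk continuous_id)).continuousOn
  refine ⟨B u₀ u₀, hB u₀ (ne_zero_of_mem_unit_sphere ⟨u₀, hu₀⟩), fun x => ?_⟩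
  rcases eq_or_ne x 0 with rfl | hx
  · simp
  set u : U := ‖x‖⁻¹ • x
  have hu : u ∈ Metric.sphere (0 : U) 1 := by
    simp [u, norm_smul, inv_mul_cancel₀ (norm_ne_zero_iff.mpr hx)]
  have hxu : x = ‖x‖ • u := by
    simp [u, smul_smul, mul_inv_cancel₀ (norm_ne_zero_iff.mpr hx)]
  have hmin_u : B u₀ u₀ ≤ B u u := hmin hu
  calc B u₀ u₀ * ‖x‖ ^ 2 ≤ B u u * ‖x‖ ^ 2 := by gcongr
    _ = B x x := by
      conv_rhs => rw [hxu]
      simp only [map_smul, LinearMap.smul_apply, smul_eq_mul]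
      ring

theorem isBounded_setOf_apply_self_eq (hB : ∀ x, x ≠ 0 → 0 < B x x) :
    IsBounded {T : U →L[ℝ] U | ∀ x, B (T x) (T x) = B x x} := by
  obtain ⟨m, hm, hmB⟩ := exists_pos_mul_norm_sq_le hB
  set C := ‖B.toContinuousBilinearMap‖
  refine isBounded_iff_forall_norm_le.mpr ⟨√(C / m), fun T hT => ?_⟩
  refine T.opNorm_le_bound (Real.sqrt_nonneg _) fun x => ?_
  have hsq : ‖T x‖ ^ 2 ≤ C / m * ‖x‖ ^ 2 := by
    rw [div_mul_eq_mul_div, le_div_iff₀ hm]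
    nlinarith [hmB (T x), hT x, B.apply_self_le_mul_norm_sq x]
  rw [← Real.sqrt_sq (norm_nonneg x), ← Real.sqrt_mul' _ (sq_nonneg _)]
  exact Real.le_sqrt_of_sq_le hsq

end LinearMap.BilinForm

namespace SiegelSpace

variable {U : Type*} [NormedAddCommGroup U] [NormedSpace ℝ U]
  (Q : LinearMap.BilinForm ℝ U) (J : U →L[ℝ] U)

def stabilizer : Set (U →L[ℝ] U) :=
  {T | Function.Bijective T ∧ (∀ x y, Q (T x) (T y) = Q x y) ∧ (∀ x, T (J x) = J (T x))}

variable {Q J}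

theorem id_mem_stabilizer : ContinuousLinearMap.id ℝ U ∈ stabilizer Q J :=
  ⟨Function.bijective_id, fun _ _ => rfl, fun _ => rfl⟩

theorem comp_mem_stabilizer {T₁ T₂ : U →L[ℝ] U} (h₁ : T₁ ∈ stabilizer Q J)
    (h₂ : T₂ ∈ stabilizer Q J) : T₁.comp T₂ ∈ stabilizer Q J :=
  ⟨h₁.1.comp h₂.1, fun x y => by simp only [ContinuousLinearMap.comp_apply, h₁.2.1, h₂.2.1],
    fun x => by simp only [ContinuousLinearMap.comp_apply, h₁.2.2, h₂.2.2]⟩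

theorem apply_self_compl₂_eq {T : U →L[ℝ] U} (hTQ : ∀ x y, Q (T x) (T y) = Q x y)
    (hTJ : ∀ x, T (J x) = J (T x)) (x : U) :
    Q.compl₂ (J : U →ₗ[ℝ] U) (T x) (T x) = Q.compl₂ (J : U →ₗ[ℝ] U) x x := by
  simp only [LinearMap.compl₂_apply, ContinuousLinearMap.coe_coe, ← hTJ, hTQ]

variable [FiniteDimensional ℝ U]

theorem exists_inverse_mem_stabilizer {T : U →L[ℝ] U} (hT : T ∈ stabilizer Q J) :
    ∃ T' ∈ stabilizer Q J, T.comp T' = ContinuousLinearMap.id ℝ U ∧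
      T'.comp T = ContinuousLinearMap.id ℝ U := by
  obtain ⟨hbij, hTQ, hTJ⟩ := hT
  let e := (LinearEquiv.ofBijective (T : U →ₗ[ℝ] U) hbij).toContinuousLinearEquiv
  let T' : U →L[ℝ] U := e.symm
  have hTT' : ∀ x, T (T' x) = x := e.apply_symm_apply
  refine ⟨T', ⟨e.symm.bijective, fun x y => ?_, fun x => e.injective ?_⟩, ?_, ?_⟩
  · rw [← hTQ, hTT', hTT']
  · change T (T' (J x)) = T (J (T' x))
    rw [hTT', hTJ, hTT']
  · exact ContinuousLinearMap.ext hTT'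
  · exact ContinuousLinearMap.ext e.symm_apply_apply

theorem stabilizer_eq_inter (hJpos : ∀ x, x ≠ 0 → 0 < Q x (J x)) :
    stabilizer Q J =
      {T | ∀ x y, Q (T x) (T y) = Q x y} ∩ {T | ∀ x, T (J x) = J (T x)} := by
  refine Set.Subset.antisymm (fun T ⟨_, hTQ, hTJ⟩ => ⟨hTQ, hTJ⟩) fun T ⟨hTQ, hTJ⟩ => ?_
  have hinj : Function.Injective (T : U →ₗ[ℝ] U) :=
    LinearMap.BilinForm.injective_of_apply_self_eq hJpos (apply_self_compl₂_eq hTQ hTJ)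
  exact ⟨⟨hinj, LinearMap.injective_iff_surjective.mp hinj⟩, hTQ, hTJ⟩

theorem isClosed_stabilizer (hJpos : ∀ x, x ≠ 0 → 0 < Q x (J x)) :
    IsClosed (stabilizer Q J) := by
  rw [stabilizer_eq_inter hJpos]
  simp only [Set.ofPred_forall]
  refine .inter (isClosed_iInter fun x => isClosed_iInter fun y => isClosed_eq ?_ continuous_const)
    (isClosed_iInter fun x => isClosed_eq (by fun_prop) (by fun_prop))
  exact show Continuous fun T : U →L[ℝ] U => Q.toContinuousBilinearMap (T x) (T y) by fun_prop

theorem isCompact_stabilizer (hJpos : ∀ x, x ≠ 0 → 0 < Q x (J x)) :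
    IsCompact (stabilizer Q J) :=
  Metric.isCompact_of_isClosed_isBounded (isClosed_stabilizer hJpos) <|
    (LinearMap.BilinForm.isBounded_setOf_apply_self_eq
      (B := Q.compl₂ (J : U →ₗ[ℝ] U)) hJpos).subset
      fun _ ⟨_, hTQ, hTJ⟩ => apply_self_compl₂_eq hTQ hTJ

end SiegelSpace

theorem siegel_space_stabilizer_compact_subgroup_general
    (U : Type*) [NormedAddCommGroup U] [NormedSpace ℝ U] [FiniteDimensional ℝ U]
    (Q : LinearMap.BilinForm ℝ U)
    (J : U →L[ℝ] U)
    (hJpos : ∀ x, x ≠ 0 → 0 < Q x (J x)) :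
    let S : Set (U →L[ℝ] U) := {T | Function.Bijective T ∧
      (∀ x y, Q (T x) (T y) = Q x y) ∧ (∀ x, T (J x) = J (T x))}
    IsCompact S ∧
    (ContinuousLinearMap.id ℝ U ∈ S) ∧
    (∀ T₁ ∈ S, ∀ T₂ ∈ S, T₁.comp T₂ ∈ S) ∧
    (∀ T ∈ S, ∃ T' ∈ S, T.comp T' = ContinuousLinearMap.id ℝ U ∧
      T'.comp T = ContinuousLinearMap.id ℝ U) :=
  ⟨SiegelSpace.isCompact_stabilizer hJpos, SiegelSpace.id_mem_stabilizer,
    fun _ h₁ _ h₂ => SiegelSpace.comp_mem_stabilizer h₁ h₂,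
    fun _ => SiegelSpace.exists_inverse_mem_stabilizer⟩

/-- Let `U` be a finite-dimensional real vector space and `Q` a
nondegenerate alternating bilinear form on `U`.  For every `J` in the Siegel space
`𝔖(U,Q)`, the stabilizer `{T ∈ GL(U) : Q(Tx,Ty) = Q(x,y) and TJ = JT}` is a compact
subset of the space of linear endomorphisms of `U` (with its natural topology), and it
is a subgroup of `GL(U)`: it contains the identity and is closed under composition and
inverses. -/
theorem siegel_space_stabilizer_compact_subgroup
    (U : Type*) [NormedAddCommGroup U] [NormedSpace ℝ U] [FiniteDimensional ℝ U]
    (Q : LinearMap.BilinForm ℝ U) (hQalt : Q.IsAlt) (hQnd : Q.Nondegenerate)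
    (J : U →L[ℝ] U)
    (hJ2 : ∀ x, J (J x) = -x)
    (hJQ : ∀ x y, Q (J x) (J y) = Q x y)
    (hJpos : ∀ x, x ≠ 0 → 0 < Q x (J x)) :
    let S : Set (U →L[ℝ] U) := {T | Function.Bijective T ∧
      (∀ x y, Q (T x) (T y) = Q x y) ∧ (∀ x, T (J x) = J (T x))}
    IsCompact S ∧
    (ContinuousLinearMap.id ℝ U ∈ S) ∧
    (∀ T₁ ∈ S, ∀ T₂ ∈ S, T₁.comp T₂ ∈ S) ∧
    (∀ T ∈ S, ∃ T' ∈ S, T.comp T' = ContinuousLinearMap.id ℝ U ∧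
      T'.comp T = ContinuousLinearMap.id ℝ U) :=
  siegel_space_stabilizer_compact_subgroup_general U Q J hJpos
end

section
/- Fix an integer g ≥ 1 and positive integers δ₁, …, δ_g, let Δ be the g × g diagonal matrix with entries δ₁, …, δ_g, and let Ω be the 2g × 2g integer matrix [[0, Δ], [−Δ, 0]]. Let 𝔖 be the set of real 2g × 2g matrices J with J² = −I, Jᵀ Ω J = Ω, and xᵀ Ω J x > 0 for all nonzero x ∈ ℝ^{2g}, and let Γ be the group of integer 2g × 2g matrices T (invertible over ℤ) with Tᵀ Ω T = Ω, acting on 𝔖 by T · J = T J T⁻¹. Then this action is properly discontinuous: for every compact subset K of 𝔖, the set { T ∈ Γ : (T · K) ∩ K ≠ ∅ } is finite. -/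
/-! For `J` in the Siegel space the form `x ↦ xᵀ Ω J x` is positive definite, so on a compact
set `K` of such `J` it is bounded below by `c ‖x‖²` and its diagonal entries are bounded above
by some `C`, uniformly in `J`. If `T` preserves `Ω`, the form of `T J T⁻¹` at `T x` is the form
of `J` at `x`; hence when both `J` and `T J T⁻¹` lie in `K`, every column of `T` satisfies
`c ‖T eⱼ‖² ≤ C`. Integral matrices with bounded entries form a finite set. -/

open Matrix

section

variable {ι : Type*} [Fintype ι]

theorem exists_pos_mul_norm_sq_le_dotProduct_mulVec {K : Set (Matrix ι ι ℝ)} (hK : IsCompact K)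
    (hpos : ∀ Q ∈ K, ∀ x ≠ 0, 0 < x ⬝ᵥ Q *ᵥ x) :
    ∃ c > 0, ∀ Q ∈ K, ∀ x, c * ‖x‖ ^ 2 ≤ x ⬝ᵥ Q *ᵥ x := by
  have hcont : Continuous fun p : Matrix ι ι ℝ × (ι → ℝ) => p.2 ⬝ᵥ p.1 *ᵥ p.2 :=
    continuous_snd.dotProduct (continuous_fst.matrix_mulVec continuous_snd)
  obtain ⟨c, hc, hmin⟩ := (hK.prod (isCompact_sphere (0 : ι → ℝ) 1)).exists_forall_le'
    hcont.continuousOn (a := 0) fun p hp ↦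
      hpos p.1 hp.1 p.2 (ne_zero_of_mem_unit_sphere ⟨p.2, hp.2⟩)
  refine ⟨c, hc, fun Q hQ x ↦ ?_⟩
  rcases eq_or_ne x 0 with rfl | hx
  · simp
  have hnorm : 0 < ‖x‖ := norm_pos_iff.mpr hx
  have hu : ‖x‖⁻¹ • x ∈ Metric.sphere (0 : ι → ℝ) 1 := by
    simp [norm_smul, hnorm.ne']
  have := hmin (Q, ‖x‖⁻¹ • x) ⟨hQ, hu⟩
  simp only [mulVec_smul, smul_dotProduct, dotProduct_smul, smul_eq_mul] at this
  calc c * ‖x‖ ^ 2 ≤ ‖x‖⁻¹ * (‖x‖⁻¹ * (x ⬝ᵥ Q *ᵥ x)) * ‖x‖ ^ 2 := by gcongr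
    _ = x ⬝ᵥ Q *ᵥ x := by field_simp

variable [DecidableEq ι]

theorem diag_le_trace_of_forall_pos {Q : Matrix ι ι ℝ} (hpos : ∀ x ≠ 0, 0 < x ⬝ᵥ Q *ᵥ x) (j : ι) :
    Q j j ≤ Q.trace := by
  have hdiag (i : ι) : 0 < Q i i := by
    simpa [mulVec_single_one] using hpos (Pi.single i 1) (by simp)
  exact Finset.single_le_sum (fun i _ ↦ (hdiag i).le) (Finset.mem_univ j)

theorem dotProduct_mulVec_conj {Ω A : Matrix ι ι ℝ} (hA : IsUnit A.det) (hΩ : Aᵀ * Ω * A = Ω)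
    (J : Matrix ι ι ℝ) (x : ι → ℝ) :
    (A *ᵥ x) ⬝ᵥ (Ω * (A * J * A⁻¹)) *ᵥ (A *ᵥ x) = x ⬝ᵥ (Ω * J) *ᵥ x := by
  have : Aᵀ * (Ω * (A * J * A⁻¹)) * A = Ω * J := by
    calc Aᵀ * (Ω * (A * J * A⁻¹)) * A = (Aᵀ * Ω * A) * J * (A⁻¹ * A) := by
          simp only [Matrix.mul_assoc]
      _ = Ω * J := by rw [hΩ, nonsing_inv_mul A hA, Matrix.mul_one]
  rw [← this, mulVec_mulVec, dotProduct_mulVec, dotProduct_mulVec, ← vecMul_transpose,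
    vecMul_vecMul]
  simp only [Matrix.mul_assoc]

theorem exists_sq_entry_le_of_conj_mem {Ω : Matrix ι ι ℝ} {K : Set (Matrix ι ι ℝ)}
    (hK : IsCompact K) (hpos : ∀ J ∈ K, ∀ x ≠ 0, 0 < x ⬝ᵥ (Ω * J) *ᵥ x) :
    ∃ B, ∀ A : Matrix ι ι ℝ, IsUnit A.det → Aᵀ * Ω * A = Ω → (∃ J ∈ K, A * J * A⁻¹ ∈ K) →
      ∀ i j, A i j ^ 2 ≤ B := by
  have hKΩ : IsCompact ((Ω * ·) '' K) := hK.image (continuous_const.matrix_mul continuous_id)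
  have hposΩ : ∀ Q ∈ (Ω * ·) '' K, ∀ x ≠ 0, 0 < x ⬝ᵥ Q *ᵥ x := by
    rintro _ ⟨J, hJ, rfl⟩
    exact hpos J hJ
  obtain ⟨c, hc, hlow⟩ := exists_pos_mul_norm_sq_le_dotProduct_mulVec hKΩ hposΩ
  obtain ⟨C, hC⟩ := hKΩ.bddAbove_image continuous_id.matrix_trace.continuousOn
  refine ⟨C / c, fun A hA hΩ ⟨J, hJ, hJ'⟩ i j ↦ ?_⟩
  rw [le_div_iff₀ hc]
  calc A i j ^ 2 * c ≤ c * ‖A *ᵥ Pi.single j 1‖ ^ 2 := by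
        rw [mul_comm, mulVec_single_one, ← sq_abs]
        gcongr
        exact norm_le_pi_norm (A.col j) i
    _ ≤ (A *ᵥ Pi.single j 1) ⬝ᵥ (Ω * (A * J * A⁻¹)) *ᵥ (A *ᵥ Pi.single j 1) :=
        hlow _ ⟨_, hJ', rfl⟩ _
    _ = (Ω * J) j j := by
        rw [dotProduct_mulVec_conj hA hΩ]
        simp
    _ ≤ (Ω * J).trace := diag_le_trace_of_forall_pos (hpos J hJ) j
    _ ≤ C := hC ⟨_, ⟨J, hJ, rfl⟩, rfl⟩

end

theorem Matrix.finite_setOf_forall_sq_entry_le {m n : Type*} [Fintype m] [Fintype n] (B : ℝ) :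
    {T : Matrix m n ℤ | ∀ i j, (T i j : ℝ) ^ 2 ≤ B}.Finite := by
  refine (Set.Finite.pi fun _ ↦ Set.Finite.pi fun _ ↦ Set.finite_Icc (-⌈B⌉) ⌈B⌉).subset ?_
  intro T hT i _ j _
  have h : |T i j| ≤ T i j ^ 2 := by
    simpa using Int.natAbs_le_self_sq (T i j)
  have hsq : T i j ^ 2 ≤ ⌈B⌉ := by exact_mod_cast (hT i j).trans (Int.le_ceil B)
  exact abs_le.mp (h.trans hsq)

theorem integral_symplectic_action_properly_discontinuous_general
    (g : ℕ) (δ : Fin g → ℤ) :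
    let Δ : Matrix (Fin g) (Fin g) ℤ := Matrix.diagonal δ
    let Ω : Matrix (Fin g ⊕ Fin g) (Fin g ⊕ Fin g) ℤ := Matrix.fromBlocks 0 Δ (-Δ) 0
    let ΩR : Matrix (Fin g ⊕ Fin g) (Fin g ⊕ Fin g) ℝ := Ω.map (Int.cast : ℤ → ℝ)
    let 𝔖 : Set (Matrix (Fin g ⊕ Fin g) (Fin g ⊕ Fin g) ℝ) :=
      {J | J * J = -1 ∧ Jᵀ * ΩR * J = ΩR ∧
        ∀ x : Fin g ⊕ Fin g → ℝ, x ≠ 0 → 0 < x ⬝ᵥ ((ΩR * J) *ᵥ x)}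
    ∀ K : Set (Matrix (Fin g ⊕ Fin g) (Fin g ⊕ Fin g) ℝ), K ⊆ 𝔖 → IsCompact K →
      {T : Matrix (Fin g ⊕ Fin g) (Fin g ⊕ Fin g) ℤ |
        IsUnit T.det ∧ Tᵀ * Ω * T = Ω ∧
        ∃ J ∈ K, (T.map (Int.cast : ℤ → ℝ)) * J * (T.map (Int.cast : ℤ → ℝ))⁻¹ ∈ K}.Finite := by
  intro Δ Ω ΩR 𝔖 K hK𝔖 hK
  obtain ⟨B, hB⟩ := exists_sq_entry_le_of_conj_mem hK fun J hJ ↦ (hK𝔖 hJ).2.2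
  refine (finite_setOf_forall_sq_entry_le B).subset fun T ⟨hdet, hΩ, hconj⟩ ↦ ?_
  have hdetR : IsUnit (T.map (Int.cast : ℤ → ℝ)).det := by
    rw [← Int.cast_det]
    exact hdet.map (Int.castRingHom ℝ)
  have hΩR : (T.map (Int.cast : ℤ → ℝ))ᵀ * ΩR * T.map (Int.cast : ℤ → ℝ) = ΩR := by
    have h := congrArg (·.map (Int.castRingHom ℝ)) hΩ
    simp only [Matrix.map_mul, transpose_map] at h
    exact h
  simpa using hB _ hdetR hΩR hconj

/-- Let `Δ = diag(δ₁,…,δ_g)` with `δᵢ > 0` and `Ω = [[0, Δ], [−Δ, 0]]`.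
The integral symplectic group `Γ = {T ∈ GL_{2g}(ℤ) : Tᵀ Ω T = Ω}` acts properly
discontinuously on the Siegel space
`𝔖 = {J : J² = −I, Jᵀ Ω J = Ω, xᵀ Ω J x > 0 for x ≠ 0}` by `T · J = T J T⁻¹`:
for every compact `K ⊆ 𝔖` the set of `T ∈ Γ` with `(T·K) ∩ K ≠ ∅` is finite. -/
theorem integral_symplectic_action_properly_discontinuous
    (g : ℕ) (hg : 1 ≤ g) (δ : Fin g → ℤ) (hδ : ∀ i, 0 < δ i) :
    let Δ : Matrix (Fin g) (Fin g) ℤ := Matrix.diagonal δ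
    let Ω : Matrix (Fin g ⊕ Fin g) (Fin g ⊕ Fin g) ℤ := Matrix.fromBlocks 0 Δ (-Δ) 0
    let ΩR : Matrix (Fin g ⊕ Fin g) (Fin g ⊕ Fin g) ℝ := Ω.map (Int.cast : ℤ → ℝ)
    let 𝔖 : Set (Matrix (Fin g ⊕ Fin g) (Fin g ⊕ Fin g) ℝ) :=
      {J | J * J = -1 ∧ Jᵀ * ΩR * J = ΩR ∧
        ∀ x : Fin g ⊕ Fin g → ℝ, x ≠ 0 → 0 < x ⬝ᵥ ((ΩR * J) *ᵥ x)}
    ∀ K : Set (Matrix (Fin g ⊕ Fin g) (Fin g ⊕ Fin g) ℝ), K ⊆ 𝔖 → IsCompact K →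
      {T : Matrix (Fin g ⊕ Fin g) (Fin g ⊕ Fin g) ℤ |
        IsUnit T.det ∧ Tᵀ * Ω * T = Ω ∧
        ∃ J ∈ K, (T.map (Int.cast : ℤ → ℝ)) * J * (T.map (Int.cast : ℤ → ℝ))⁻¹ ∈ K}.Finite :=
  integral_symplectic_action_properly_discontinuous_general g δ
end

section
/- Let a group G act linearly on a complex vector space V, let v, w ∈ V be nonzero, and suppose that the symmetric 2-tensor t = v ⊗ w + w ⊗ v spans a G-stable line in V ⊗ V (for instance, t is G-invariant). Then every g ∈ G either maps span{v} onto span{v} and span{w} onto span{w}, or maps span{v} onto span{w} and span{w} onto span{v}. -/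
/-!
Applying `f ⊗ f` for a linear form `f` turns `x ⊗ y + y ⊗ x = c • (v ⊗ w + w ⊗ v)` into
`f x * f y = c * (f v * f w)`. Every form vanishing on `v` therefore kills `f x * f y`, and since
a vector space is not a union of two proper subspaces, `x` or `y` lies on the line `K ∙ v`;
likewise for `w`. When `K ∙ v = K ∙ w` this does not pin down both lines, and one applies
`f ⊗ id` instead to see that `x` and `y` lie in `span {v, w} = K ∙ v`.
-/

open scoped TensorProduct

open Module Submodule

section SymmTensor

variable {K V : Type*} [Field K] [AddCommGroup V] [Module K V]

variable (K) in
def symmTensor (x y : V) : V ⊗[K] V := x ⊗ₜ y + y ⊗ₜ x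

theorem symmTensor_comm (x y : V) : symmTensor K x y = symmTensor K y x :=
  add_comm _ _

theorem TensorProduct.map_symmTensor {W : Type*} [AddCommGroup W] [Module K W]
    (f : V →ₗ[K] W) (x y : V) :
    TensorProduct.map f f (symmTensor K x y) = symmTensor K (f x) (f y) := by
  simp only [symmTensor, map_add, TensorProduct.map_tmul]

theorem span_singleton_eq_of_mem {x v : V} (hx : x ≠ 0) (h : x ∈ K ∙ v) :
    K ∙ x = K ∙ v := by
  obtain ⟨a, rfl⟩ := mem_span_singleton.mp h
  exact span_singleton_smul_eq (left_ne_zero_of_smul hx).isUnit v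

/-- Two linear forms `f, g` vanishing on `p` with `f x ≠ 0` and `g y ≠ 0` would give the form
`f + g`, which vanishes on `p` but not on both `x` and `y`. -/
theorem mem_or_mem_of_forall_dual_mul_eq_zero {p : Submodule K V} {x y : V}
    (h : ∀ f : Dual K V, p ≤ LinearMap.ker f → f x * f y = 0) : x ∈ p ∨ y ∈ p := by
  by_contra! hxy
  obtain ⟨f, hfx, hfp⟩ := exists_le_ker_of_notMem hxy.1
  obtain ⟨g, hgy, hgp⟩ := exists_le_ker_of_notMem hxy.2
  have hfy : f y = 0 := (mul_eq_zero.mp (h f hfp)).resolve_left hfx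
  have hgx : g x = 0 := (mul_eq_zero.mp (h g hgp)).resolve_right hgy
  have hsum := h (f + g) fun u hu => by
    simp [LinearMap.mem_ker.mp (hfp hu), LinearMap.mem_ker.mp (hgp hu)]
  simp only [LinearMap.add_apply, hfy, hgx, add_zero, zero_add] at hsum
  exact mul_ne_zero hfx hgy hsum

variable [NeZero (2 : K)] {x y v w : V} {c : K}

theorem dual_apply_mul_eq_of_symmTensor_eq (h : symmTensor K x y = c • symmTensor K v w)
    (f : Dual K V) : f x * f y = c * (f v * f w) := by
  have hf := congrArg (fun t => TensorProduct.lid K K (TensorProduct.map f f t)) h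
  simp only [symmTensor, map_add, map_smul, TensorProduct.map_tmul, TensorProduct.lid_tmul,
    smul_eq_mul] at hf
  refine mul_left_cancel₀ (two_ne_zero' K) ?_
  linear_combination hf

theorem mem_span_pair_of_symmTensor_eq (hy : y ≠ 0)
    (h : symmTensor K x y = c • symmTensor K v w) :
    x ∈ span K {v, w} := by
  by_contra hx
  obtain ⟨f, hfx, hfp⟩ := exists_le_ker_of_notMem hx
  have hfv : f v = 0 := hfp (subset_span (by simp))
  have hfw : f w = 0 := hfp (subset_span (by simp))
  have hfy : f y = 0 := by
    have := dual_apply_mul_eq_of_symmTensor_eq h f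
    rw [hfv, zero_mul, mul_zero] at this
    exact (mul_eq_zero.mp this).resolve_left hfx
  have hcontr := congrArg (fun t => TensorProduct.lid K V (TensorProduct.map f LinearMap.id t)) h
  simp only [symmTensor, map_add, map_smul, TensorProduct.map_tmul, TensorProduct.lid_tmul,
    LinearMap.id_apply, hfv, hfw, hfy, zero_smul, add_zero, smul_zero] at hcontr
  exact hy ((smul_eq_zero.mp hcontr).resolve_left hfx)

theorem span_singleton_eq_or_of_symmTensor_eq (hx : x ≠ 0) (hy : y ≠ 0)
    (h : symmTensor K x y = c • symmTensor K v w) :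
    (K ∙ x = K ∙ v ∧ K ∙ y = K ∙ w) ∨ (K ∙ x = K ∙ w ∧ K ∙ y = K ∙ v) := by
  by_cases hvw : K ∙ v = K ∙ w
  · have hpair : span K {v, w} = K ∙ v := by
      rw [span_insert, hvw, sup_idem]
    have hxv := span_singleton_eq_of_mem hx (hpair ▸ mem_span_pair_of_symmTensor_eq hy h)
    have hyv := span_singleton_eq_of_mem hy
      (hpair ▸ mem_span_pair_of_symmTensor_eq hx ((symmTensor_comm y x).trans h))
    exact Or.inl ⟨hxv, hyv.trans hvw⟩
  have hmem (u : V) (hu : u = v ∨ u = w) : x ∈ K ∙ u ∨ y ∈ K ∙ u := by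
    refine mem_or_mem_of_forall_dual_mul_eq_zero fun f hf => ?_
    rw [dual_apply_mul_eq_of_symmTensor_eq h f]
    rcases hu with rfl | rfl <;> simp [LinearMap.mem_ker.mp (hf (mem_span_singleton_self _))]
  rcases hmem v (.inl rfl) with hxv | hyv <;> rcases hmem w (.inr rfl) with hxw | hyw
  · exact absurd ((span_singleton_eq_of_mem hx hxv).symm.trans
      (span_singleton_eq_of_mem hx hxw)) hvw
  · exact Or.inl ⟨span_singleton_eq_of_mem hx hxv, span_singleton_eq_of_mem hy hyw⟩
  · exact Or.inr ⟨span_singleton_eq_of_mem hx hxw, span_singleton_eq_of_mem hy hyv⟩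
  · exact absurd ((span_singleton_eq_of_mem hy hyv).symm.trans
      (span_singleton_eq_of_mem hy hyw)) hvw

end SymmTensor

/-- If a group `G` acts linearly on a complex vector space `V`, `v, w ∈ V`
are nonzero, and the symmetric 2-tensor `t = v ⊗ w + w ⊗ v` spans a `G`-stable line in
`V ⊗ V` (i.e. each `g` sends `t` to a scalar multiple of `t`), then every `g ∈ G` either
maps `span{v}` onto `span{v}` and `span{w}` onto `span{w}`, or maps `span{v}` onto
`span{w}` and `span{w}` onto `span{v}`. -/
theorem stable_line_decomposable_tensor_swaps_factor_lines
    (G V : Type*) [Group G] [AddCommGroup V] [Module ℂ V]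
    (ρ : Representation ℂ G V) (v w : V) (hv : v ≠ 0) (hw : w ≠ 0)
    (hline : ∀ g : G, ∃ c : ℂ,
      TensorProduct.map (ρ g) (ρ g) (v ⊗ₜ[ℂ] w + w ⊗ₜ[ℂ] v) =
        c • (v ⊗ₜ[ℂ] w + w ⊗ₜ[ℂ] v)) :
    ∀ g : G,
      (Submodule.map (ρ g) (Submodule.span ℂ {v}) = Submodule.span ℂ {v} ∧
        Submodule.map (ρ g) (Submodule.span ℂ {w}) = Submodule.span ℂ {w}) ∨
      (Submodule.map (ρ g) (Submodule.span ℂ {v}) = Submodule.span ℂ {w} ∧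
        Submodule.map (ρ g) (Submodule.span ℂ {w}) = Submodule.span ℂ {v}) := by
  intro g
  obtain ⟨c, hc⟩ := hline g
  have hne {u : V} (hu : u ≠ 0) : ρ g u ≠ 0 :=
    (map_ne_zero_iff _ (ρ.apply_bijective g).injective).mpr hu
  simp only [map_span, Set.image_singleton]
  exact span_singleton_eq_or_of_symmTensor_eq (hne hv) (hne hw)
    ((TensorProduct.map_symmTensor (ρ g) v w).symm.trans hc)
end

section
/- Let G = (ℤ/3) × D₄, where D₄ is the dihedral group of order 8 with rotation r of order 4 and reflection s, and let ω be a generator of ℤ/3 written multiplicatively. Set x₁ = (1, s), x₂ = (1, s r³), x₃ = (ω², r²), x₄ = (ω, r³) and σ = (1, r²). Then: (i) x₁ x₂ x₃ x₄ = 1; (ii) x₁, x₂, x₃, x₄ generate G; (iii) the orders of x₁, x₂, x₃, x₄ are 2, 2, 6, 12 respectively; (iv) σ is a central involution of G with σ ∈ ⟨x₃⟩ and σ ∈ ⟨x₄⟩ but σ ∉ ⟨x₁⟩ and σ ∉ ⟨x₂⟩, so that Σ_{i : σ ∈ ⟨xᵢ⟩} |G|/ord(xᵢ) = 24/6 + 24/12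 = 6; (v) |G| · (−2 + Σ_{i=1}^{4}(1 − 1/ord(xᵢ))) = 18 = 2·10 − 2. -/
/-- The group `G = (ℤ/3) × D₄` of order 24 (the group `G(24,10)`), where `D₄` is the
dihedral group of order 8 and `ℤ/3` is written multiplicatively. -/
abbrev G2410 : Type := Multiplicative (ZMod 3) × DihedralGroup 4

/-- The generator `ω` of the (multiplicatively written) `ℤ/3` factor. -/
def ωgen : Multiplicative (ZMod 3) := Multiplicative.ofAdd (1 : ZMod 3)

/-- The rotation `r` of order 4 in the dihedral group `D₄` of order 8. -/
def rD4 : DihedralGroup 4 := DihedralGroup.r 1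

/-- A reflection `s` in the dihedral group `D₄` of order 8. -/
def sD4 : DihedralGroup 4 := DihedralGroup.sr 0

/-!
The order of an element of a direct product is the lcm of the orders of its components, so the
orders of the `xᵢ` follow from `ord ω = 3`, `ord r = 4` and `ord (s rⁱ) = 2`. Since `r²` is central
in `D₄`, `σ` is central. The group is generated by `(ω, 1) = x₃²`, `(1, r) = (x₁x₂)³` and
`(1, s) = x₁`. Finally `σ = x₃³ = x₄⁶`, whereas `⟨x₁⟩ = {1, x₁}` and `⟨x₂⟩ = {1, x₂}`.
-/

theorem mem_zpowers_iff_of_orderOf_eq_two {G : Type*} [Group G] {x y : G} (hx : orderOf x = 2) :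
    y ∈ Subgroup.zpowers x ↔ y = 1 ∨ y = x := by
  rw [Subgroup.mem_zpowers_iff]
  constructor
  · rintro ⟨k, rfl⟩
    rw [← zpow_mod_orderOf, hx]
    rcases Int.emod_two_eq_zero_or_one k with h | h <;> simp [h]
  · rintro (rfl | rfl)
    exacts [⟨0, zpow_zero x⟩, ⟨1, zpow_one y⟩]

theorem Subgroup.closure_image_inl_union_image_inr_eq_top {G N : Type*} [Group G] [Group N]
    {s : Set G} {t : Set N} (hs : closure s = ⊤) (ht : closure t = ⊤) :
    closure (MonoidHom.inl G N '' s ∪ MonoidHom.inr G N '' t) = ⊤ := by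
  rw [eq_top_iff, ← top_prod_top, ← hs, ← ht, prod_le_iff, MonoidHom.map_closure,
    MonoidHom.map_closure]
  exact ⟨closure_mono Set.subset_union_left, closure_mono Set.subset_union_right⟩

theorem Multiplicative.closure_ofAdd_one_zmod (n : ℕ) :
    Subgroup.closure {ofAdd (1 : ZMod n)} = ⊤ := by
  refine eq_top_iff.2 fun g _ => ?_
  obtain ⟨k, hk⟩ := ZMod.intCast_surjective g.toAdd
  rw [← ofAdd_toAdd g, ← hk, ← zsmul_one, ofAdd_zsmul]
  exact zpow_mem (Subgroup.subset_closure (Set.mem_singleton _)) k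

namespace DihedralGroup

variable {n : ℕ}

theorem closure_r_one_sr_zero : Subgroup.closure {r 1, sr 0} = (⊤ : Subgroup (DihedralGroup n)) := by
  have hr (i : ZMod n) : r i ∈ Subgroup.closure {r 1, sr 0} := by
    obtain ⟨k, rfl⟩ := ZMod.intCast_surjective i
    rw [← r_one_zpow]
    exact zpow_mem (Subgroup.subset_closure (Set.mem_insert _ _)) k
  refine eq_top_iff.2 fun g _ => ?_
  cases g with
  | r i => exact hr i
  | sr i =>
    rw [← zero_add i, ← sr_mul_r]
    exact mul_mem (Subgroup.subset_closure (by simp)) (hr i)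

theorem r_mem_center {i : ZMod n} (hi : i + i = 0) : r i ∈ Subgroup.center (DihedralGroup n) := by
  rw [Subgroup.mem_center_iff]
  rintro (j | j)
  · rw [r_mul_r, r_mul_r, add_comm]
  · rw [sr_mul_r, r_mul_sr]
    congr 1
    linear_combination hi

theorem orderOf_one_sr {M : Type*} [Monoid M] (i : ZMod n) :
    orderOf ((1 : M), sr i) = 2 := by
  rw [Prod.orderOf_mk, orderOf_one, orderOf_sr, Nat.lcm_one_left]

end DihedralGroup

namespace G2410

open DihedralGroup

theorem orderOf_ωgen : orderOf ωgen = 3 := by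
  rw [ωgen, orderOf_ofAdd_eq_addOrderOf, ZMod.addOrderOf_one]

theorem orderOf_rD4 : orderOf rD4 = 4 := orderOf_r_one

theorem rD4_pow (k : ℕ) : rD4 ^ k = r k := r_one_pow k

theorem sD4_mul_rD4_pow (k : ℕ) : sD4 * rD4 ^ k = sr k := by
  rw [sD4, rD4_pow, sr_mul_r, zero_add]

theorem orderOf_ωgen_pow_rD4_pow (a b : ℕ) :
    orderOf ((ωgen ^ a, rD4 ^ b) : G2410) = Nat.lcm (3 / Nat.gcd 3 a) (4 / Nat.gcd 4 b) := by
  rw [Prod.orderOf_mk, orderOf_pow, orderOf_pow, orderOf_ωgen, orderOf_rD4]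

theorem closure_ωgen_rD4_sD4 : Subgroup.closure {((ωgen, 1) : G2410), (1, rD4), (1, sD4)} = ⊤ := by
  have h := Subgroup.closure_image_inl_union_image_inr_eq_top
    (Multiplicative.closure_ofAdd_one_zmod 3) (closure_r_one_sr_zero (n := 4))
  simp only [Set.image_singleton, Set.image_insert_eq, Set.singleton_union, MonoidHom.inl_apply,
    MonoidHom.inr_apply] at h
  exact h

theorem one_rD4_sq_mem_center : ((1, rD4 ^ 2) : G2410) ∈ Subgroup.center G2410 := by
  rw [Subgroup.center_prod, Subgroup.mem_prod, rD4_pow]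
  exact ⟨Subgroup.one_mem _, r_mem_center (by decide)⟩

theorem nat_card : Nat.card G2410 = 24 := by
  simp [Nat.card_eq_fintype_card, DihedralGroup.card]

end G2410

/-- With `x₁ = (1, s)`, `x₂ = (1, s r³)`, `x₃ = (ω², r²)`,
`x₄ = (ω, r³)` and `σ = (1, r²)` in `G = (ℤ/3) × D₄`: (i) `x₁x₂x₃x₄ = 1`;
(ii) the `xᵢ` generate `G`; (iii) their orders are 2, 2, 6, 12; (iv) `σ` is a central
involution lying in `⟨x₃⟩` and `⟨x₄⟩` but not in `⟨x₁⟩` or `⟨x₂⟩`, so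
`Σ_{i : σ∈⟨xᵢ⟩} |G|/ord(xᵢ) = 24/6 + 24/12 = 6`;
(v) `|G|·(−2 + Σᵢ(1 − 1/ord(xᵢ))) = 18 = 2·10 − 2`. -/
theorem Z3_x_D4_prym_datum :
    let x₁ : G2410 := (1, sD4)
    let x₂ : G2410 := (1, sD4 * rD4 ^ 3)
    let x₃ : G2410 := (ωgen ^ 2, rD4 ^ 2)
    let x₄ : G2410 := (ωgen, rD4 ^ 3)
    let σ : G2410 := (1, rD4 ^ 2)
    x₁ * x₂ * x₃ * x₄ = 1 ∧
    Subgroup.closure {x₁, x₂, x₃, x₄} = (⊤ : Subgroup G2410) ∧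
    orderOf x₁ = 2 ∧ orderOf x₂ = 2 ∧ orderOf x₃ = 6 ∧ orderOf x₄ = 12 ∧
    σ ∈ Subgroup.center G2410 ∧ orderOf σ = 2 ∧
    σ ∈ Subgroup.zpowers x₃ ∧ σ ∈ Subgroup.zpowers x₄ ∧
    σ ∉ Subgroup.zpowers x₁ ∧ σ ∉ Subgroup.zpowers x₂ ∧
    Nat.card G2410 / orderOf x₃ + Nat.card G2410 / orderOf x₄ = 6 ∧
    (Nat.card G2410 : ℚ) * (-2 + ((1 - 1 / (orderOf x₁ : ℚ)) + (1 - 1 / (orderOf x₂ : ℚ))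
      + (1 - 1 / (orderOf x₃ : ℚ)) + (1 - 1 / (orderOf x₄ : ℚ)))) = 18 ∧
    (18 : ℚ) = 2 * 10 - 2 := by
  intro x₁ x₂ x₃ x₄ σ
  have h₁ : orderOf x₁ = 2 := DihedralGroup.orderOf_one_sr 0
  have h₂ : orderOf x₂ = 2 := by
    simp only [x₂, G2410.sD4_mul_rD4_pow]
    exact DihedralGroup.orderOf_one_sr _
  have h₃ : orderOf x₃ = 6 := G2410.orderOf_ωgen_pow_rD4_pow 2 2
  have h₄ : orderOf x₄ = 12 := by simpa [Nat.lcm] using G2410.orderOf_ωgen_pow_rD4_pow 1 3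
  have hσ : orderOf σ = 2 := by simpa [Nat.lcm] using G2410.orderOf_ωgen_pow_rD4_pow 0 2
  have hgen : Subgroup.closure {((ωgen, 1) : G2410), (1, rD4), (1, sD4)} ≤
      Subgroup.closure {x₁, x₂, x₃, x₄} := by
    have hx₁ : x₁ ∈ Subgroup.closure {x₁, x₂, x₃, x₄} := Subgroup.subset_closure (by simp)
    have hx₂ : x₂ ∈ Subgroup.closure {x₁, x₂, x₃, x₄} := Subgroup.subset_closure (by simp)
    have hx₃ : x₃ ∈ Subgroup.closure {x₁, x₂, x₃, x₄} := Subgroup.subset_closure (by simp)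
    rw [Subgroup.closure_le, Set.insert_subset_iff, Set.insert_subset_iff, Set.singleton_subset_iff,
      show ((ωgen, 1) : G2410) = x₃ ^ 2 by decide, show ((1, rD4) : G2410) = (x₁ * x₂) ^ 3 by decide]
    exact ⟨pow_mem hx₃ 2, pow_mem (mul_mem hx₁ hx₂) 3, hx₁⟩
  refine ⟨by decide, top_le_iff.1 (G2410.closure_ωgen_rD4_sD4 ▸ hgen), h₁, h₂, h₃, h₄,
    G2410.one_rD4_sq_mem_center, hσ,
    ⟨3, by decide⟩, ⟨6, by decide⟩, (mem_zpowers_iff_of_orderOf_eq_two h₁).not.2 (by decide),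
    (mem_zpowers_iff_of_orderOf_eq_two h₂).not.2 (by decide), by rw [G2410.nat_card, h₃, h₄],
    by rw [G2410.nat_card, h₁, h₂, h₃, h₄]; norm_num, by norm_num⟩
end
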